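/- Let n ≥ 5 be an odd integer. Then λ(K⁺_{(n−1)/2,(n+1)/2}) is the largest real root of the polynomial g(x) = x³ − x² + ((1 − n²)/4)x + n²/4 − n − 5/4; that is, g(λ(K⁺_{(n−1)/2,(n+1)/2})) = 0 and every real root x of g satisfies x ≤ λ(K⁺_{(n−1)/2,(n+1)/2}). -/

import Mathlib

open SimpleGraph

/-- The spectral radius (largest adjacency eigenvalue) of a finite simple graph. -/
noncomputable def specRad {V : Type*} [Fintype V] (G : SimpleGraph V) : ℝ :=
  letI : DecidableEq V := Classical.decEq V
  letI : DecidableRel G.Adj := Classical.decRel _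
  sSup (spectrum ℝ (G.adjMatrix ℝ))

/-- `KplusAB a b` : the complete bipartite graph `K_{a,b}` with one extra edge
(between vertices `0` and `1`) inside the part of size `a`. -/
def KplusAB (a b : ℕ) : SimpleGraph (Fin a ⊕ Fin b) where
  Adj x y :=
    match x, y with
    | .inl i, .inl j => (i.val = 0 ∧ j.val = 1) ∨ (i.val = 1 ∧ j.val = 0)
    | .inl _, .inr _ => True
    | .inr _, .inl _ => True
    | .inr _, .inr _ => False
  symm := ⟨by rintro (i | i) (j | j) h <;> simp_all <;> tauto⟩
  loopless := ⟨by rintro (i | i) h <;> simp_all <;> omega⟩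

/-!
Let `v` be an eigenvector of `K⁺_{a,b}` for `μ`, where the extra edge joins vertices `0` and `1`; let
`S = v 0 + v 1`, `α` the sum of `v` over the part of size `a`, `β` its sum over the part of size `b`.
The eigenvalue equations give `μ S = S + 2β`, `μ α = S + a β` and `μ β = b α`, whence `g(μ) β = 0`
for `g(x) = x³ - x² - a b x + a b - 2b`, while `β = 0` forces `v = 0` unless `μ ∈ {0, -1}`.
Conversely every nonzero root of `g` is an eigenvalue, with an explicit eigenvector. As `g(1) < 0`,
`g` has a root above `1`, so the spectral radius is neither `0` nor `-1`, hence it is the largest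
root of `g`. For `a = (n-1)/2`, `b = (n+1)/2`, `g` is the cubic of the statement.
-/

open SimpleGraph Matrix Finset

theorem Matrix.mem_spectrum_iff_exists_mulVec_eq_smul {n K : Type*} [Field K] [Fintype n]
    [DecidableEq n] (A : Matrix n n K) (μ : K) :
    μ ∈ spectrum K A ↔ ∃ v ≠ 0, A *ᵥ v = μ • v := by
  rw [← spectrum_toLin', ← Module.End.hasEigenvalue_iff_mem_spectrum]
  constructor
  · intro h
    obtain ⟨v, hv⟩ := h.exists_hasEigenvector
    exact ⟨v, hv.2, by simpa using hv.apply_eq_smul⟩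
  · rintro ⟨v, hv, h⟩
    exact Module.End.hasEigenvalue_of_hasEigenvector
      ⟨by simpa [Module.End.mem_eigenspace_iff] using h, hv⟩

def kplusCubic (a b x : ℝ) : ℝ := x ^ 3 - x ^ 2 - a * b * x + a * b - 2 * b

theorem kplusCubic_exists_root_one_lt {a b : ℝ} (ha : 0 ≤ a) (hb : 0 < b) :
    ∃ r, 1 < r ∧ kplusCubic a b r = 0 := by
  have hcont : Continuous (kplusCubic a b) := by unfold kplusCubic; fun_prop
  have hneg : kplusCubic a b 1 < 0 := by unfold kplusCubic; linarith
  have hpos : 0 ≤ kplusCubic a b (a * b + 2 * b + 2) := by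
    unfold kplusCubic; nlinarith [mul_nonneg ha hb.le, mul_nonneg (mul_nonneg ha hb.le) hb.le]
  obtain ⟨r, hr, hr0⟩ := intermediate_value_Icc (by nlinarith [mul_nonneg ha hb.le])
    hcont.continuousOn ⟨hneg.le, hpos⟩
  refine ⟨r, lt_of_le_of_ne hr.1 ?_, hr0⟩
  rintro rfl
  linarith

namespace KplusAB

variable {a b : ℕ}

@[simp] lemma adj_inl_inr (i : Fin a) (j : Fin b) : (KplusAB a b).Adj (.inl i) (.inr j) := trivial

@[simp] lemma adj_inr_inl (j : Fin b) (i : Fin a) : (KplusAB a b).Adj (.inr j) (.inl i) := trivial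

@[simp] lemma not_adj_inr_inr (j j' : Fin b) : ¬ (KplusAB a b).Adj (.inr j) (.inr j') := id

lemma adj_inl_inl {i j : Fin a} :
    (KplusAB a b).Adj (.inl i) (.inl j) ↔ (i.val = 0 ∧ j.val = 1) ∨ (i.val = 1 ∧ j.val = 0) :=
  Iff.rfl

lemma adjMatrix_mulVec_inr [DecidableRel (KplusAB a b).Adj] (v : Fin a ⊕ Fin b → ℝ)
    (j : Fin b) : ((KplusAB a b).adjMatrix ℝ *ᵥ v) (.inr j) = ∑ i, v (.inl i) := by
  simp [mulVec, dotProduct, Fintype.sum_sum_type]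

section TwoSpecialVertices

variable [DecidableRel (KplusAB (a + 2) b).Adj] (v : Fin (a + 2) ⊕ Fin b → ℝ)

lemma adjMatrix_mulVec_inl_zero :
    ((KplusAB (a + 2) b).adjMatrix ℝ *ᵥ v) (.inl 0) = v (.inl 1) + ∑ j, v (.inr j) := by
  simp [mulVec, dotProduct, Fintype.sum_sum_type, Fin.sum_univ_succ, adj_inl_inl]

lemma adjMatrix_mulVec_inl_one :
    ((KplusAB (a + 2) b).adjMatrix ℝ *ᵥ v) (.inl 1) = v (.inl 0) + ∑ j, v (.inr j) := by
  simp [mulVec, dotProduct, Fintype.sum_sum_type, adj_inl_inl]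

lemma adjMatrix_mulVec_inl_succ_succ (i : Fin a) :
    ((KplusAB (a + 2) b).adjMatrix ℝ *ᵥ v) (.inl i.succ.succ) = ∑ j, v (.inr j) := by
  simp [mulVec, dotProduct, Fintype.sum_sum_type, adj_inl_inl]

end TwoSpecialVertices

section

variable [DecidableRel (KplusAB a b).Adj]

theorem kplusCubic_eq_zero_of_mulVec_eq_smul (ha : 2 ≤ a) (hb : 0 < b) {μ : ℝ} (hμ0 : μ ≠ 0)
    (hμ1 : μ ≠ -1) {v : Fin a ⊕ Fin b → ℝ} (hv : v ≠ 0)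
    (hev : (KplusAB a b).adjMatrix ℝ *ᵥ v = μ • v) : kplusCubic a b μ = 0 := by
  obtain ⟨a, rfl⟩ := Nat.exists_eq_add_of_le' ha
  have ev (x) : ((KplusAB (a + 2) b).adjMatrix ℝ *ᵥ v) x = μ * v x := congrFun hev x
  set α := ∑ i, v (.inl i) with hα
  set β := ∑ j, v (.inr j) with hβ
  have h0 : μ * v (.inl 0) = v (.inl 1) + β := by rw [← ev, adjMatrix_mulVec_inl_zero]
  have h1 : μ * v (.inl 1) = v (.inl 0) + β := by rw [← ev, adjMatrix_mulVec_inl_one]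
  have hrest (i : Fin a) : μ * v (.inl i.succ.succ) = β := by
    rw [← ev, adjMatrix_mulVec_inl_succ_succ]
  have hB (j : Fin b) : μ * v (.inr j) = α := by rw [← ev, adjMatrix_mulVec_inr]
  have hα_split : α = v (.inl 0) + v (.inl 1) + ∑ i : Fin a, v (.inl i.succ.succ) := by
    simp only [hα, Fin.sum_univ_succ]; simp [add_assoc]
  have hμα : μ * α = v (.inl 0) + v (.inl 1) + (a + 2) * β := by
    simp only [hα_split, mul_add, mul_sum, h0, h1, hrest, sum_const, card_univ, Fintype.card_fin,
      nsmul_eq_mul]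
    ring
  have hμβ : μ * β = b * α := by
    simp only [hβ, mul_sum, hB, sum_const, card_univ, Fintype.card_fin, nsmul_eq_mul]
  have hcubic : kplusCubic (a + 2 : ℕ) b μ * β = 0 := by
    unfold kplusCubic; push_cast
    linear_combination (μ - 1) * (μ * hμβ + b * hμα) + b * (h0 + h1)
  refine (mul_eq_zero.mp hcubic).resolve_right fun hβ0 => hv ?_
  have hα0 : α = 0 := by
    have : (b : ℝ) * α = 0 := by rw [← hμβ, hβ0, mul_zero]
    exact (mul_eq_zero.mp this).resolve_left (by positivity)
  have hvB (j : Fin b) : v (.inr j) = 0 := by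
    simpa [hα0, hμ0] using hB j
  have hvrest (i : Fin a) : v (.inl i.succ.succ) = 0 := by
    simpa [hβ0, hμ0] using hrest i
  have hv1 : v (.inl 1) = -v (.inl 0) := by
    simp only [hvrest, sum_const_zero, add_zero, hα0] at hα_split
    linarith
  have hv0 : v (.inl 0) = 0 := by
    have : (μ + 1) * v (.inl 0) = 0 := by linear_combination h0 + hv1 + hβ0
    exact (mul_eq_zero.mp this).resolve_left fun h => hμ1 (by linarith)
  ext (i | j)
  · induction i using Fin.cases with
    | zero => exact hv0
    | succ i =>
      induction i using Fin.cases with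
      | zero => simpa [hv0] using hv1
      | succ i => exact hvrest i
  · exact hvB j

theorem mem_spectrum_of_kplusCubic_eq_zero [DecidableEq (Fin a ⊕ Fin b)] (ha : 2 ≤ a)
    (hb : 0 < b) {x : ℝ} (hx0 : x ≠ 0) (hx : kplusCubic a b x = 0) :
    x ∈ spectrum ℝ ((KplusAB a b).adjMatrix ℝ) := by
  obtain ⟨a, rfl⟩ := Nat.exists_eq_add_of_le' ha
  let v : Fin (a + 2) ⊕ Fin b → ℝ :=
    Sum.elim (vecCons (b * x) (vecCons (b * x) fun _ => b * (x - 1))) fun _ => x * (x - 1)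
  refine (mem_spectrum_iff_exists_mulVec_eq_smul _ x).mpr ⟨v, ?_, ?_⟩
  · intro hv
    have : (b : ℝ) * x = 0 := congrFun hv (.inl 0)
    simp_all [hb.ne']
  · unfold kplusCubic at hx
    push_cast at hx
    ext (i | j)
    · induction i using Fin.cases with
      | zero => rw [adjMatrix_mulVec_inl_zero]; simp [v]; ring
      | succ i =>
        induction i using Fin.cases with
        | zero => rw [Fin.succ_zero_eq_one, adjMatrix_mulVec_inl_one]; simp [v]; ring
        | succ i => rw [adjMatrix_mulVec_inl_succ_succ]; simp [v]; ring
    · rw [adjMatrix_mulVec_inr]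
      simp [v, Fin.sum_univ_succ]
      linear_combination -hx

end

theorem isGreatest_specRad (ha : 2 ≤ a) (hb : 0 < b) :
    IsGreatest {x | kplusCubic a b x = 0} (specRad (KplusAB a b)) := by
  let _ : DecidableEq (Fin a ⊕ Fin b) := Classical.decEq _
  let _ : DecidableRel (KplusAB a b).Adj := Classical.decRel _
  set s := spectrum ℝ ((KplusAB a b).adjMatrix ℝ)
  change IsGreatest _ (sSup s)
  have hfin : s.Finite := Matrix.finite_spectrum _
  obtain ⟨r, hr1, hr⟩ := kplusCubic_exists_root_one_lt (Nat.cast_nonneg a) (Nat.cast_pos.mpr hb)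
  have hrs : r ∈ s := mem_spectrum_of_kplusCubic_eq_zero ha hb (by positivity) hr
  have hrL : r ≤ sSup s := le_csSup hfin.bddAbove hrs
  refine ⟨?_, fun x hx => ?_⟩
  · obtain ⟨v, hv, hev⟩ :=
      (mem_spectrum_iff_exists_mulVec_eq_smul _ _).mp (Set.Nonempty.csSup_mem ⟨r, hrs⟩ hfin)
    exact kplusCubic_eq_zero_of_mulVec_eq_smul ha hb (by linarith) (by linarith) hv hev
  · by_cases hx0 : x = 0
    · linarith
    · exact le_csSup hfin.bddAbove (mem_spectrum_of_kplusCubic_eq_zero ha hb hx0 hx)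

end KplusAB

theorem Kplus_odd_char_poly (n : ℕ) (hn : 5 ≤ n) (hodd : Odd n) :
    (specRad (KplusAB ((n - 1) / 2) ((n + 1) / 2))) ^ 3
        - (specRad (KplusAB ((n - 1) / 2) ((n + 1) / 2))) ^ 2
        + ((1 - (n : ℝ) ^ 2) / 4) * specRad (KplusAB ((n - 1) / 2) ((n + 1) / 2))
        + (n : ℝ) ^ 2 / 4 - n - 5 / 4 = 0 ∧
      ∀ x : ℝ, x ^ 3 - x ^ 2 + ((1 - (n : ℝ) ^ 2) / 4) * x + (n : ℝ) ^ 2 / 4 - n - 5 / 4 = 0 →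
        x ≤ specRad (KplusAB ((n - 1) / 2) ((n + 1) / 2)) := by
  obtain ⟨k, rfl⟩ := hodd
  have hsmall : (2 * k + 1 - 1) / 2 = k := by omega
  have hlarge : (2 * k + 1 + 1) / 2 = k + 1 := by omega
  have hcubic (x : ℝ) : kplusCubic k (k + 1 : ℕ) x =
      x ^ 3 - x ^ 2 + ((1 - ((2 * k + 1 : ℕ) : ℝ) ^ 2) / 4) * x
        + ((2 * k + 1 : ℕ) : ℝ) ^ 2 / 4 - (2 * k + 1 : ℕ) - 5 / 4 := by
    unfold kplusCubic; push_cast; ring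
  obtain ⟨hroot, hmax⟩ := KplusAB.isGreatest_specRad (a := k) (b := k + 1) (by omega) k.succ_pos
  rw [hsmall, hlarge]
  exact ⟨(hcubic _).symm.trans hroot, fun x hx => hmax ((hcubic x).trans hx)⟩
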